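/- Let n ≥ 1 and let F be a functor from the opposite of the poset of subsets of Fin n (ordered by inclusion) to the category of groups such that for every nonempty I ⊆ Fin n the canonical homomorphism from F(I) to the limit of the restriction of F to the proper subsets of I is surjective (i.e. F is an n-cubic extension of groups). Put X = F(Fin n), let f_i : X → F(Fin n ∖ {i}) be the homomorphisms induced by the inclusions Fin n ∖ {i} ⊆ Fin n, let K_i = ker f_i and A = ⋂_{i ∈ Fin n} K_i, and let ⬜, ◇^I and π^I : ⬜ → ◇^I be the diamond group, the punctured diamond group and the forgetful homomorphism built from the f_i. Then the following are equivalent: (a) for every subset I ⊆ Fin n the commutator subgroup ⁅⋂_{i ∈ I} K_i, ⋂_{i ∈ Fin n ∖ I} K_i⁆ of X is trivial (where an intersection over the empty index set is X itself); (b) A is an abelian group and for every I ⊆ Fin n there exists a group isomorphism θ : ⬜ → A × ◇^I whose composite with the projection A × ◇^I → ◇^I equals π^I; (c) A is abelian and such an isomorphism θ exists for at least one I ⊆ Fin n. -/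

import Mathlib

/-- The set of `n`-fold diamonds for homomorphisms `f i : X → Y i`. -/
def diamondGrpSet {n : ℕ} {X : Type*} [Group X] {Y : Fin n → Type*}
    [∀ i, Group (Y i)] (f : ∀ i, X →* Y i) : Set (Set (Fin n) → X) :=
  {m | ∀ (i : Fin n) (J : Set (Fin n)), i ∉ J → f i (m J) = f i (m (insert i J))}

/-- The diamond group `⬜`, as a subgroup of `∏_{J ⊆ Fin n} X`. -/
def diamondSubgroup {n : ℕ} {X : Type*} [Group X] {Y : Fin n → Type*}
    [∀ i, Group (Y i)] (f : ∀ i, X →* Y i) : Subgroup (Set (Fin n) → X) where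
  carrier := diamondGrpSet f
  one_mem' := by intro i J _; rfl
  mul_mem' := by
    intro a b ha hb i J hi
    simp only [Pi.mul_apply, map_mul, ha i J hi, hb i J hi]
  inv_mem' := by
    intro a ha i J hi
    simp only [Pi.inv_apply, map_inv, ha i J hi]

/-- The set of punctured `n`-fold diamonds (the entry at `I` is missing). -/
def puncturedGrpSet {n : ℕ} {X : Type*} [Group X] {Y : Fin n → Type*}
    [∀ i, Group (Y i)] (f : ∀ i, X →* Y i) (I : Set (Fin n)) :
    Set ({J : Set (Fin n) // J ≠ I} → X) :=
  {m | ∀ (i : Fin n) (J : Set (Fin n)) (_ : i ∉ J) (hJ : J ≠ I)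
      (hJ' : insert i J ≠ I),
    f i (m ⟨J, hJ⟩) = f i (m ⟨insert i J, hJ'⟩)}

/-- The punctured diamond group `◇^I`, as a subgroup. -/
def puncturedSubgroup {n : ℕ} {X : Type*} [Group X] {Y : Fin n → Type*}
    [∀ i, Group (Y i)] (f : ∀ i, X →* Y i) (I : Set (Fin n)) :
    Subgroup ({J : Set (Fin n) // J ≠ I} → X) where
  carrier := puncturedGrpSet f I
  one_mem' := by intro i J _ hJ hJ'; rfl
  mul_mem' := by
    intro a b ha hb i J hi hJ hJ'
    simp only [Pi.mul_apply, map_mul, ha i J hi hJ hJ', hb i J hi hJ hJ']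
  inv_mem' := by
    intro a ha i J hi hJ hJ'
    simp only [Pi.inv_apply, map_inv, ha i J hi hJ hJ']

/-- The initial arrows `f i : F(Fin n) → F(Fin n ∖ {i})` of an `n`-fold arrow `F`. -/
def initialMaps {n : ℕ} (F : Set (Fin n) → Type*) [∀ I, Group (F I)]
    (φ : ∀ I J : Set (Fin n), J ⊆ I → (F I →* F J)) (i : Fin n) :
    F Set.univ →* F (Set.univ \ {i}) :=
  φ Set.univ (Set.univ \ {i}) (fun _ hx => hx.1)

/-!
The forgetful map `π^I : ⬜ → ◇^I` is always surjective: after reflecting the cube so that `I`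
becomes `∅`, the missing corner of a punctured diamond is filled by an explicit alternating word
in its other corners. Its kernel consists of the diamonds concentrated at `I`, a copy of `A`. So
the splitting `⬜ ≅ A × ◇^I` amounts to a retraction `⬜ → A`.

Under the commutator condition such a retraction is the iterated difference of the reflected
diamond: apply the difference operators `m ↦ (m ∘ insert k)⁻¹ * (m ∘ (· \ {k}))` in all
directions and read off the entry at `∅`. A difference of a product is a conjugate of a
difference times a difference; the error terms are commutators `⁅u, h⁆` of families with
entries in `K_U` and `K_V`, where `U ∪ V` contains every direction not yet differentiated.
Differences turn such commutators into products of conjugates of commutators of the same kind,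
and at the end `⁅K_U, K_{Uᶜ}⁆ = 1` kills them.

Conversely, given `a ∈ K_S` and `b ∈ K_{Sᶜ}`, the diamonds equal to `a` (resp. `b`) at the
corners agreeing with `I` on `S` (resp. `Sᶜ`) and to `1` elsewhere have the common corner `I`
only. So their commutator lies in `ker π^I`, and the splitting maps it to a commutator in the
abelian group `A`; hence `⁅a, b⁆ = 1`.
-/

open scoped symmDiff commutatorElement

namespace Diamond

theorem commutatorElement_mem {G : Type*} [Group G] (H : Subgroup G) {a b : G} (ha : a ∈ H)
    (hb : b ∈ H) : ⁅a, b⁆ ∈ H := by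
  rw [commutatorElement_def]
  exact mul_mem (mul_mem (mul_mem ha hb) (inv_mem ha)) (inv_mem hb)

theorem bijective_prod_of_splitting {G A H : Type*} [Group G] [Group A] [Group H] {ρ : G →* A}
    {π : G →* H} {σ : A →* G} (hρσ : ρ.comp σ = MonoidHom.id A) (hσ : π.ker = σ.range)
    (hπ : Function.Surjective π) : Function.Bijective (ρ.prod π) := by
  have hρσ' (a : A) : ρ (σ a) = a := DFunLike.congr_fun hρσ a
  have hπσ (a : A) : π (σ a) = 1 := by
    rw [← MonoidHom.mem_ker, hσ]
    exact ⟨a, rfl⟩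
  refine ⟨(injective_iff_map_eq_one _).2 fun g hg => ?_, fun ⟨a, h⟩ => ?_⟩
  · obtain ⟨hρg, hπg⟩ := Prod.ext_iff.1 hg
    obtain ⟨c, rfl⟩ : g ∈ σ.range := hσ ▸ hπg
    rw [MonoidHom.prod_apply, hρσ'] at hρg
    rw [show c = 1 from hρg, map_one]
  · obtain ⟨g, rfl⟩ := hπ h
    exact ⟨σ (a * (ρ g)⁻¹) * g, by simp [hρσ', hπσ]⟩

section Cubes

variable {ι X : Type*} [Group X] {Y : ι → Type*} [∀ i, Group (Y i)] (f : ∀ i, X →* Y i)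

def kerInter (S : Set ι) : Subgroup X := ⨅ i ∈ S, (f i).ker

def diamondsIn (i : ι) : Subgroup (Set ι → X) where
  carrier := {m | ∀ J, f i (m J) = f i (m (insert i J))}
  one_mem' _ := rfl
  mul_mem' ha hb J := by simp only [Pi.mul_apply, map_mul, ha J, hb J]
  inv_mem' ha J := by simp only [Pi.inv_apply, map_inv, ha J]

def cubeSubgroup (l : List ι) (S : Set ι) : Subgroup (Set ι → X) :=
  (⨅ i ∈ l, diamondsIn f i) ⊓ Subgroup.pi Set.univ fun _ => kerInter f S

def commutatorCubes (l : List ι) : Subgroup (Set ι → X) :=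
  Subgroup.closure {x | ∃ U V : Set ι, {i | i ∉ l} ⊆ U ∪ V ∧
    ∃ u ∈ cubeSubgroup f l U, ∃ h ∈ cubeSubgroup f l V, ⁅u, h⁆ = x}

/-- Oriented from `insert k J` to `J \ {k}`, so that the iterated difference of a family
concentrated at `∅` is its value there, with no sign. -/
def cubeDiff (k : ι) (m : Set ι → X) : Set ι → X := (m ∘ insert k)⁻¹ * (m ∘ (· \ {k}))

def iteratedDiff : List ι → (Set ι → X) → X
  | [], m => m ∅
  | k :: l, m => iteratedDiff l (cubeDiff k m)

open Classical in
noncomputable def faceIndicator (S : Set ι) (c : X) : Set ι → X :=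
  fun J => if Disjoint J S then c else 1

variable {f}

theorem mem_kerInter {S : Set ι} {x : X} : x ∈ kerInter f S ↔ ∀ i ∈ S, f i x = 1 := by
  simp [kerInter, Subgroup.mem_iInf]

instance kerInter_normal {S : Set ι} : (kerInter f S).Normal :=
  Subgroup.normal_iInf_normal fun i => Subgroup.normal_iInf_normal fun _ => (f i).normal_ker

theorem kerInter_anti {S T : Set ι} (h : S ⊆ T) : kerInter f T ≤ kerInter f S :=
  fun _ hx => mem_kerInter.2 fun i hi => mem_kerInter.1 hx i (h hi)

theorem mem_cubeSubgroup {l : List ι} {S : Set ι} {m : Set ι → X} :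
    m ∈ cubeSubgroup f l S ↔ (∀ i ∈ l, m ∈ diamondsIn f i) ∧ ∀ J, m J ∈ kerInter f S := by
  simp [cubeSubgroup, Subgroup.mem_iInf, Subgroup.mem_pi]

theorem cubeSubgroup_anti {l : List ι} {S T : Set ι} (h : S ⊆ T) :
    cubeSubgroup f l T ≤ cubeSubgroup f l S :=
  fun _ hm => mem_cubeSubgroup.2
    ⟨(mem_cubeSubgroup.1 hm).1, fun J => kerInter_anti h ((mem_cubeSubgroup.1 hm).2 J)⟩

theorem cubeSubgroup_cons_le {k : ι} {l : List ι} {S : Set ι} :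
    cubeSubgroup f (k :: l) S ≤ cubeSubgroup f l S :=
  fun _ hm => mem_cubeSubgroup.2
    ⟨fun i hi => (mem_cubeSubgroup.1 hm).1 i (List.mem_cons_of_mem k hi),
      (mem_cubeSubgroup.1 hm).2⟩

theorem conj_mem_cubeSubgroup {l : List ι} {S : Set ι} {g m : Set ι → X}
    (hg : g ∈ cubeSubgroup f l ∅) (hm : m ∈ cubeSubgroup f l S) :
    g * m * g⁻¹ ∈ cubeSubgroup f l S := by
  rw [mem_cubeSubgroup] at hg hm ⊢
  refine ⟨fun i hi => mul_mem (mul_mem (hg.1 i hi) (hm.1 i hi)) (inv_mem (hg.1 i hi)),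
    fun J => ?_⟩
  simpa only [Pi.mul_apply, Pi.inv_apply] using
    Subgroup.Normal.conj_mem inferInstance _ (hm.2 J) (g J)

theorem comp_insert_mem_diamondsIn {i : ι} {m : Set ι → X} (k : ι) (hm : m ∈ diamondsIn f i) :
    m ∘ insert k ∈ diamondsIn f i := fun J => by
  simpa only [Function.comp_apply, Set.insert_comm i k] using hm (insert k J)

theorem comp_sdiff_mem_diamondsIn {i : ι} {m : Set ι → X} (k : ι) (hm : m ∈ diamondsIn f i) :
    m ∘ (· \ {k}) ∈ diamondsIn f i := fun J => by
  by_cases hik : i = k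
  · subst hik
    simp only [Function.comp_apply, Set.insert_sdiff_of_mem J (Set.mem_singleton i)]
  · simpa only [Function.comp_apply, Set.insert_sdiff_singleton_comm hik] using hm (J \ {k})

theorem cubeDiff_apply (k : ι) (m : Set ι → X) (J : Set ι) :
    cubeDiff k m J = (m (insert k J))⁻¹ * m (J \ {k}) := rfl

theorem cubeDiff_mem_diamondsIn {i : ι} {m : Set ι → X} (k : ι) (hm : m ∈ diamondsIn f i) :
    cubeDiff k m ∈ diamondsIn f i :=
  mul_mem (inv_mem (comp_insert_mem_diamondsIn k hm)) (comp_sdiff_mem_diamondsIn k hm)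

theorem map_cubeDiff_self {k : ι} {m : Set ι → X} (hm : m ∈ diamondsIn f k) (J : Set ι) :
    f k (cubeDiff k m J) = 1 := by
  rw [cubeDiff_apply, map_mul, map_inv, hm (J \ {k}), Set.insert_sdiff_singleton, inv_mul_cancel]

theorem comp_insert_mem_cubeSubgroup {l : List ι} {S : Set ι} {m : Set ι → X} (k : ι)
    (hm : m ∈ cubeSubgroup f l S) : m ∘ insert k ∈ cubeSubgroup f l S := by
  rw [mem_cubeSubgroup] at hm ⊢
  exact ⟨fun i hi => comp_insert_mem_diamondsIn k (hm.1 i hi), fun J => hm.2 _⟩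

theorem cubeDiff_mem_cubeSubgroup {k : ι} {l : List ι} {S : Set ι} {m : Set ι → X}
    (hm : m ∈ cubeSubgroup f (k :: l) S) : cubeDiff k m ∈ cubeSubgroup f l (insert k S) := by
  rw [mem_cubeSubgroup] at hm ⊢
  refine ⟨fun i hi => cubeDiff_mem_diamondsIn k (hm.1 i (List.mem_cons_of_mem k hi)),
    fun J => mem_kerInter.2 ?_⟩
  rintro i (rfl | hi)
  · exact map_cubeDiff_self (hm.1 i List.mem_cons_self) J
  · rw [cubeDiff_apply, map_mul, map_inv, mem_kerInter.1 (hm.2 _) i hi,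
      mem_kerInter.1 (hm.2 _) i hi, inv_one, one_mul]

theorem cubeDiff_mem_cubeSubgroup_compl {k : ι} {l : List ι} {m : Set ι → X}
    (hm : m ∈ cubeSubgroup f (k :: l) {i | i ∉ k :: l}) :
    cubeDiff k m ∈ cubeSubgroup f l {i | i ∉ l} :=
  cubeSubgroup_anti (fun i hi => by by_cases hik : i = k <;> simp_all)
    (cubeDiff_mem_cubeSubgroup hm)

theorem cubeDiff_mul (k : ι) (x y : Set ι → X) :
    cubeDiff k (x * y) = (y ∘ insert k)⁻¹ * cubeDiff k x * (y ∘ insert k) * cubeDiff k y := by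
  funext J
  simp only [cubeDiff_apply, Pi.mul_apply, Pi.inv_apply, Function.comp_apply]
  group

theorem cubeDiff_inv (k : ι) (x : Set ι → X) :
    cubeDiff k x⁻¹ = (x ∘ insert k) * (cubeDiff k x)⁻¹ * (x ∘ insert k)⁻¹ := by
  funext J
  simp only [cubeDiff_apply, Pi.mul_apply, Pi.inv_apply, Function.comp_apply]
  group

theorem cubeDiff_commutatorElement (k : ι) (u h : Set ι → X) :
    cubeDiff k ⁅u, h⁆ =
      ⁅h ∘ insert k, u ∘ insert k⁆ *
        ((u ∘ insert k) * ⁅cubeDiff k u, h ∘ insert k⁆ * (u ∘ insert k)⁻¹ *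
          ((u ∘ insert k * h ∘ insert k) * ⁅cubeDiff k u, cubeDiff k h⁆ *
            (u ∘ insert k * h ∘ insert k)⁻¹)) * ⁅h ∘ insert k, u ∘ insert k⁆⁻¹ *
        ((h ∘ insert k) * ⁅u ∘ insert k, cubeDiff k h⁆ * (h ∘ insert k)⁻¹) := by
  funext J
  simp only [cubeDiff_apply, Pi.mul_apply, Pi.inv_apply, Function.comp_apply,
    commutatorElement_def]
  group

theorem commutator_mem_commutatorCubes {l : List ι} {U V : Set ι} {u h : Set ι → X}
    (hUV : {i | i ∉ l} ⊆ U ∪ V) (hu : u ∈ cubeSubgroup f l U) (hh : h ∈ cubeSubgroup f l V) :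
    ⁅u, h⁆ ∈ commutatorCubes f l :=
  Subgroup.subset_closure ⟨U, V, hUV, u, hu, h, hh, rfl⟩

theorem commutatorCubes_le (l : List ι) :
    commutatorCubes f l ≤ cubeSubgroup f l {i | i ∉ l} := by
  refine (Subgroup.closure_le _).2 ?_
  rintro _ ⟨U, V, hUV, u, hu, h, hh, rfl⟩
  rw [mem_cubeSubgroup] at hu hh
  rw [SetLike.mem_coe, mem_cubeSubgroup]
  refine ⟨fun i hi => commutatorElement_mem _ (hu.1 i hi) (hh.1 i hi),
    fun J => mem_kerInter.2 fun i hi => ?_⟩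
  change f i ⁅u J, h J⁆ = 1
  rcases hUV hi with hiU | hiV
  · rw [map_commutatorElement, mem_kerInter.1 (hu.2 J) i hiU, commutatorElement_one_left]
  · rw [map_commutatorElement, mem_kerInter.1 (hh.2 J) i hiV, commutatorElement_one_right]

theorem conj_mem_commutatorCubes {l : List ι} {g x : Set ι → X} (hg : g ∈ cubeSubgroup f l ∅)
    (hx : x ∈ commutatorCubes f l) : g * x * g⁻¹ ∈ commutatorCubes f l := by
  suffices commutatorCubes f l ≤ (commutatorCubes f l).comap (MulAut.conj g).toMonoidHom from
    this hx
  refine (Subgroup.closure_le _).2 ?_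
  rintro _ ⟨U, V, hUV, u, hu, h, hh, rfl⟩
  simpa only [SetLike.mem_coe, Subgroup.coe_comap, Set.mem_preimage, MulEquiv.coe_toMonoidHom,
    map_commutatorElement, MulAut.conj_apply] using
    commutator_mem_commutatorCubes hUV (conj_mem_cubeSubgroup hg hu) (conj_mem_cubeSubgroup hg hh)

theorem cubeDiff_commutator_mem_commutatorCubes {k : ι} {l : List ι} {U V : Set ι}
    {u h : Set ι → X} (hUV : {i | i ∉ k :: l} ⊆ U ∪ V) (hu : u ∈ cubeSubgroup f (k :: l) U)
    (hh : h ∈ cubeSubgroup f (k :: l) V) : cubeDiff k ⁅u, h⁆ ∈ commutatorCubes f l := by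
  have hcov : {i | i ∉ l} ⊆ insert k U ∪ V := fun i hi => by
    by_cases hik : i = k
    · exact Or.inl (Or.inl hik)
    · rcases hUV (show i ∈ {i | i ∉ k :: l} by simp [hik, hi.out]) with hiU | hiV
      · exact Or.inl (Or.inr hiU)
      · exact Or.inr hiV
  have huk := comp_insert_mem_cubeSubgroup k (cubeSubgroup_cons_le hu)
  have hhk := comp_insert_mem_cubeSubgroup k (cubeSubgroup_cons_le hh)
  have hu₀ := cubeSubgroup_anti (Set.empty_subset U) huk
  have hh₀ := cubeSubgroup_anti (Set.empty_subset V) hhk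
  rw [cubeDiff_commutatorElement]
  refine mul_mem (conj_mem_commutatorCubes (commutatorElement_mem _ hh₀ hu₀)
    (mul_mem (conj_mem_commutatorCubes hu₀ ?_) (conj_mem_commutatorCubes (mul_mem hu₀ hh₀) ?_)))
    (conj_mem_commutatorCubes hh₀ ?_)
  · exact commutator_mem_commutatorCubes hcov (cubeDiff_mem_cubeSubgroup hu) hhk
  · exact commutator_mem_commutatorCubes
      (hcov.trans (Set.union_subset_union_right _ (Set.subset_insert k V)))
      (cubeDiff_mem_cubeSubgroup hu) (cubeDiff_mem_cubeSubgroup hh)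
  · refine commutator_mem_commutatorCubes (fun i hi => ?_) huk (cubeDiff_mem_cubeSubgroup hh)
    rcases hcov hi with (hik | hiU) | hiV
    · exact Or.inr (Or.inl hik)
    · exact Or.inl hiU
    · exact Or.inr (Or.inr hiV)

theorem cubeDiff_mem_commutatorCubes {k : ι} {l : List ι} {x : Set ι → X}
    (hx : x ∈ commutatorCubes f (k :: l)) : cubeDiff k x ∈ commutatorCubes f l := by
  have hconj {y : Set ι → X} (hy : y ∈ commutatorCubes f (k :: l)) :
      y ∘ insert k ∈ cubeSubgroup f l ∅ :=
    comp_insert_mem_cubeSubgroup k <|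
      cubeSubgroup_anti (Set.empty_subset _) (cubeSubgroup_cons_le (commutatorCubes_le _ hy))
  induction hx using Subgroup.closure_induction with
  | mem _ hx =>
    obtain ⟨U, V, hUV, u, hu, h, hh, rfl⟩ := hx
    exact cubeDiff_commutator_mem_commutatorCubes hUV hu hh
  | one => simp [cubeDiff]
  | mul y z hy hz hy' hz' =>
    rw [cubeDiff_mul]
    exact mul_mem (by simpa using conj_mem_commutatorCubes (inv_mem (hconj hz)) hy') hz'
  | inv y hy hy' =>
    rw [cubeDiff_inv]
    exact conj_mem_commutatorCubes (hconj hy) (inv_mem hy')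

theorem iteratedDiff_eq_one (hCC : ∀ S : Set ι, ⁅kerInter f S, kerInter f Sᶜ⁆ = ⊥) :
    ∀ {l : List ι} {x : Set ι → X}, x ∈ commutatorCubes f l → iteratedDiff l x = 1
  | [], x, hx => by
    suffices commutatorCubes f [] ≤ (⊥ : Subgroup X).comap (Pi.evalMonoidHom (fun _ => X) ∅) from
      Subgroup.mem_bot.1 (this hx)
    refine (Subgroup.closure_le _).2 ?_
    rintro _ ⟨U, V, hUV, u, hu, h, hh, rfl⟩
    have hV : kerInter f V ≤ kerInter f Uᶜ :=
      kerInter_anti fun i hi => (hUV List.not_mem_nil).resolve_left hi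
    rw [SetLike.mem_coe, Subgroup.mem_comap, ← hCC U]
    exact Subgroup.commutator_mem_commutator ((mem_cubeSubgroup.1 hu).2 ∅)
      (hV ((mem_cubeSubgroup.1 hh).2 ∅))
  | k :: l, x, hx =>
    (iteratedDiff_eq_one hCC (cubeDiff_mem_commutatorCubes hx) :
      iteratedDiff l (cubeDiff k x) = 1)

theorem iteratedDiff_mul (hCC : ∀ S : Set ι, ⁅kerInter f S, kerInter f Sᶜ⁆ = ⊥) :
    ∀ {l : List ι} {x y : Set ι → X}, x ∈ cubeSubgroup f l {i | i ∉ l} →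
      y ∈ cubeSubgroup f l {i | i ∉ l} →
        iteratedDiff l (x * y) = iteratedDiff l x * iteratedDiff l y
  | [], _, _, _, _ => rfl
  | k :: l, x, y, hx, hy => by
    have conj_invariant {g z : Set ι → X} (hg : g ∈ cubeSubgroup f l ∅)
        (hz : z ∈ cubeSubgroup f l {i | i ∉ l}) :
        iteratedDiff l (g⁻¹ * z * g) = iteratedDiff l z := by
      have hc : ⁅z⁻¹, g⁻¹⁆ ∈ commutatorCubes f l :=
        commutator_mem_commutatorCubes Set.subset_union_left (inv_mem hz) (inv_mem hg)
      rw [show g⁻¹ * z * g = z * ⁅z⁻¹, g⁻¹⁆ by group,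
        iteratedDiff_mul hCC hz (commutatorCubes_le l hc), iteratedDiff_eq_one hCC hc, mul_one]
    have hx' := cubeDiff_mem_cubeSubgroup_compl hx
    have hy' := cubeDiff_mem_cubeSubgroup_compl hy
    have hg : y ∘ insert k ∈ cubeSubgroup f l ∅ := comp_insert_mem_cubeSubgroup k
      (cubeSubgroup_anti (Set.empty_subset _) (cubeSubgroup_cons_le hy))
    have hconj : (y ∘ insert k)⁻¹ * cubeDiff k x * (y ∘ insert k) ∈
        cubeSubgroup f l {i | i ∉ l} := by
      simpa using conj_mem_cubeSubgroup (inv_mem hg) hx'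
    change iteratedDiff l (cubeDiff k (x * y)) =
      iteratedDiff l (cubeDiff k x) * iteratedDiff l (cubeDiff k y)
    rw [cubeDiff_mul, iteratedDiff_mul hCC hconj hy', conj_invariant hg hx']

theorem map_iteratedDiff :
    ∀ {l : List ι} {x : Set ι → X}, x ∈ cubeSubgroup f l {i | i ∉ l} →
      ∀ i, f i (iteratedDiff l x) = 1
  | [], _, hx, i => mem_kerInter.1 ((mem_cubeSubgroup.1 hx).2 ∅) i List.not_mem_nil
  | _ :: _, _, hx, i => map_iteratedDiff (cubeDiff_mem_cubeSubgroup_compl hx) i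

theorem cubeDiff_faceIndicator {k : ι} {S : Set ι} (hk : k ∉ S) (c : X) :
    cubeDiff k (faceIndicator (insert k S) c) = faceIndicator S c := by
  have hdisj (J : Set ι) : Disjoint (J \ {k}) (insert k S) ↔ Disjoint J S := by
    rw [Set.disjoint_insert_right, disjoint_sdiff_comm, Set.sdiff_singleton_eq_self hk]
    simp
  funext J
  by_cases hJ : Disjoint J S <;> simp [cubeDiff_apply, faceIndicator, hdisj, hJ]

theorem iteratedDiff_faceIndicator : ∀ {l : List ι}, l.Nodup → ∀ c : X,
    iteratedDiff l (faceIndicator {i | i ∈ l} c) = c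
  | [], _, c => by simp [iteratedDiff, faceIndicator]
  | k :: l, hl, c => by
    have hS : {i | i ∈ k :: l} = insert k {i | i ∈ l} := by ext; simp
    rw [iteratedDiff, hS, cubeDiff_faceIndicator (S := {i | i ∈ l}) (List.nodup_cons.1 hl).1,
      iteratedDiff_faceIndicator (List.nodup_cons.1 hl).2]

theorem mul_comm_of_mem_iInf_ker (hCC : ∀ S : Set ι, ⁅kerInter f S, kerInter f Sᶜ⁆ = ⊥)
    {a : X} (ha : a ∈ ⨅ i, (f i).ker) (b : X) : a * b = b * a := by
  have hab : ⁅a, b⁆ ∈ ⁅kerInter f Set.univ, kerInter f Set.univᶜ⁆ :=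
    Subgroup.commutator_mem_commutator (mem_kerInter.2 fun i _ => Subgroup.mem_iInf.1 ha i)
      (mem_kerInter.2 fun i hi => absurd (Set.mem_univ i) hi)
  rw [hCC, Subgroup.mem_bot] at hab
  exact commutatorElement_eq_one_iff_mul_comm.1 hab

end Cubes

section Reflections

variable {ι X : Type*} [Group X] {Y : ι → Type*} [∀ i, Group (Y i)] {f : ∀ i, X →* Y i}

theorem symmDiff_singleton_of_notMem {i : ι} {J : Set ι} (hi : i ∉ J) :
    J ∆ {i} = insert i J := by
  ext x; by_cases hx : x = i <;> simp [Set.mem_symmDiff, hx, hi]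

theorem symmDiff_singleton_of_mem {i : ι} {J : Set ι} (hi : i ∈ J) : J ∆ {i} = J \ {i} := by
  ext x; by_cases hx : x = i <;> simp [Set.mem_symmDiff, hx, hi]

theorem forall_symmDiff_singleton {i : ι} {p : Set ι → Set ι → Prop}
    (hp : ∀ J K, p J K → p K J) (h : ∀ J, i ∉ J → p J (insert i J)) (J : Set ι) :
    p J (J ∆ {i}) := by
  by_cases hi : i ∈ J
  · have := h (J \ {i}) fun h' => h'.2 rfl
    rw [Set.insert_sdiff_self_of_mem hi] at this
    rw [symmDiff_singleton_of_mem hi]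
    exact hp _ _ this
  · rw [symmDiff_singleton_of_notMem hi]
    exact h J hi

theorem mem_diamondsIn_iff_symmDiff {i : ι} {m : Set ι → X} :
    m ∈ diamondsIn f i ↔ ∀ J, f i (m J) = f i (m (J ∆ {i})) := by
  refine ⟨fun hm => forall_symmDiff_singleton (p := fun J K => f i (m J) = f i (m K))
    (fun _ _ => Eq.symm) fun J _ => hm J, fun h J => ?_⟩
  by_cases hi : i ∈ J
  · rw [Set.insert_eq_of_mem hi]
  · rw [← symmDiff_singleton_of_notMem hi]
    exact h J

theorem comp_symmDiff_mem_diamondsIn {i : ι} {m : Set ι → X} (I : Set ι)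
    (hm : m ∈ diamondsIn f i) : m ∘ (I ∆ ·) ∈ diamondsIn f i := by
  rw [mem_diamondsIn_iff_symmDiff] at hm ⊢
  intro J
  simpa only [Function.comp_apply, symmDiff_assoc] using hm (I ∆ J)

theorem mem_diamondsIn_of_map_eq_one {i : ι} {m : Set ι → X} (h : ∀ J, f i (m J) = 1) :
    m ∈ diamondsIn f i :=
  fun J => (h J).trans (h _).symm

theorem faceIndicator_mem_diamondsIn {S : Set ι} {c : X} (hc : c ∈ kerInter f S) (i : ι) :
    faceIndicator S c ∈ diamondsIn f i := by
  by_cases hi : i ∈ S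
  · refine mem_diamondsIn_of_map_eq_one fun J => ?_
    unfold faceIndicator
    split_ifs <;> simp [mem_kerInter.1 hc i hi]
  · intro J
    have hdisj : Disjoint (insert i J) S ↔ Disjoint J S := by
      simp [Set.disjoint_insert_left, hi]
    by_cases hJ : Disjoint J S <;> simp [faceIndicator, hdisj, hJ]

end Reflections

section Fillers

variable {ι X : Type*} [Group X] {Y : ι → Type*} [∀ i, Group (Y i)] {f : ∀ i, X →* Y i}

/-- Fills the corner `U` of the subcube `{U ∪ T | T ⊆ l}` from its other corners. -/
def cornerFiller (E : Set ι → X) : List ι → Set ι → X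
  | [], _ => 1
  | k :: l, U => cornerFiller E l U * (cornerFiller E l (insert k U))⁻¹ * E (insert k U)

theorem map_cornerFiller_insert {E : Set ι → X}
    (hE : ∀ i T, T.Nonempty → f i (E T) = f i (E (insert i T))) {j : ι} :
    ∀ {l : List ι}, j ∉ l → ∀ U, f j (cornerFiller E l U) = f j (cornerFiller E l (insert j U))
  | [], _, _ => rfl
  | k :: l, hj, U => by
    have hjl : j ∉ l := fun h => hj (List.mem_cons_of_mem k h)
    simp only [cornerFiller, map_mul, map_inv]
    rw [map_cornerFiller_insert hE hjl U, map_cornerFiller_insert hE hjl (insert k U),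
      hE j _ (Set.insert_nonempty k U), Set.insert_comm j k]

theorem map_cornerFiller {E : Set ι → X}
    (hE : ∀ i T, T.Nonempty → f i (E T) = f i (E (insert i T))) :
    ∀ {l : List ι}, l.Nodup → ∀ {i}, i ∈ l → ∀ U,
      f i (cornerFiller E l U) = f i (E (insert i U))
  | k :: l, hl, i, hi, U => by
    simp only [cornerFiller, map_mul, map_inv]
    rcases List.mem_cons.1 hi with rfl | hi
    · rw [map_cornerFiller_insert hE (List.nodup_cons.1 hl).1 U, mul_inv_cancel, one_mul]
    · rw [map_cornerFiller hE (List.nodup_cons.1 hl).2 hi U,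
        map_cornerFiller hE (List.nodup_cons.1 hl).2 hi (insert k U),
        hE i _ (Set.insert_nonempty k U), inv_mul_cancel_right]

theorem exists_map_eq_map_singleton {E : Set ι → X}
    (hE : ∀ i T, T.Nonempty → f i (E T) = f i (E (insert i T))) {l : List ι} (hl : l.Nodup) :
    ∃ x, ∀ i ∈ l, f i x = f i (E {i}) :=
  ⟨cornerFiller E l ∅, fun i hi => by rw [map_cornerFiller hE hl hi, Set.singleton_def]⟩

end Fillers

section DiamondGroups

variable {n : ℕ} {X : Type*} [Group X] {Y : Fin n → Type*} [∀ i, Group (Y i)]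

theorem mem_diamondGrpSet_iff {f : ∀ i, X →* Y i} {m : Set (Fin n) → X} :
    m ∈ diamondGrpSet f ↔ ∀ i, m ∈ diamondsIn f i := by
  refine ⟨fun hm i J => ?_, fun hm i J _ => hm i J⟩
  by_cases hi : i ∈ J
  · rw [Set.insert_eq_of_mem hi]
  · exact hm i J hi

variable (f : ∀ i, X →* Y i)

/-- `π^I : ⬜ → ◇^I`. -/
def puncture (I : Set (Fin n)) : diamondSubgroup f →* puncturedSubgroup f I where
  toFun m := ⟨fun J => m.1 J.1, fun i J hi _ _ => m.2 i J hi⟩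
  map_one' := rfl
  map_mul' _ _ := rfl

open Classical in
noncomputable def singleDiamond (I : Set (Fin n)) : ↥(⨅ i, (f i).ker) →* diamondSubgroup f :=
  ((MonoidHom.mulSingle (fun _ => X) I).comp (⨅ i, (f i).ker).subtype).codRestrict _ fun c =>
    mem_diamondGrpSet_iff.2 fun i => mem_diamondsIn_of_map_eq_one fun J => by
      by_cases hJ : J = I
      · simpa [hJ] using Subgroup.mem_iInf.1 c.2 i
      · simp [hJ]

variable {f}

theorem ker_puncture (I : Set (Fin n)) : (puncture f I).ker = (singleDiamond f I).range := by
  ext m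
  refine ⟨fun hm => ?_, ?_⟩
  · have hoff (J : Set (Fin n)) (hJ : J ≠ I) : m.1 J = 1 :=
      congrFun (congrArg Subtype.val hm) ⟨J, hJ⟩
    have hI : m.1 I ∈ ⨅ i, (f i).ker := Subgroup.mem_iInf.2 fun i => by
      have hne : I ∆ {i} ≠ I := by simp [symmDiff_eq_left]
      rw [MonoidHom.mem_ker, mem_diamondsIn_iff_symmDiff.1 (mem_diamondGrpSet_iff.1 m.2 i) I,
        hoff _ hne, map_one]
    refine ⟨⟨m.1 I, hI⟩, Subtype.ext (funext fun J => ?_)⟩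
    by_cases hJ : J = I
    · subst hJ
      exact Pi.mulSingle_eq_same (M := fun _ => X) J _
    · rw [hoff J hJ]
      exact Pi.mulSingle_eq_of_ne (M := fun _ => X) hJ _
  · rintro ⟨c, rfl⟩
    exact Subtype.ext (funext fun J => Pi.mulSingle_eq_of_ne (M := fun _ => X) J.2 _)

theorem exists_update_mem_diamondGrpSet {I : Set (Fin n)} {m₀ : Set (Fin n) → X}
    (hm₀ : ∀ i J, J ≠ I → J ∆ {i} ≠ I → f i (m₀ J) = f i (m₀ (J ∆ {i}))) :
    ∃ x, Function.update m₀ I x ∈ diamondGrpSet f := by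
  classical
  have hne {T : Set (Fin n)} (hT : T.Nonempty) : I ∆ T ≠ I := by
    simpa [symmDiff_eq_left] using hT.ne_empty
  have hE (i : Fin n) (T : Set (Fin n)) (hT : T.Nonempty) :
      f i ((m₀ ∘ (I ∆ ·)) T) = f i ((m₀ ∘ (I ∆ ·)) (insert i T)) := by
    by_cases hi : i ∈ T
    · rw [Set.insert_eq_of_mem hi]
    · have hT' := hne (Set.insert_nonempty i T)
      rw [← symmDiff_singleton_of_notMem hi] at hT' ⊢
      simp only [Function.comp_apply, ← symmDiff_assoc] at hT' ⊢
      exact hm₀ i _ (hne hT) hT'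
  obtain ⟨x, hx⟩ := exists_map_eq_map_singleton hE (List.nodup_finRange n)
  have hcorner (i : Fin n) :
      f i (Function.update m₀ I x I) = f i (Function.update m₀ I x (I ∆ {i})) := by
    rw [Function.update_self, Function.update_of_ne (hne (Set.singleton_nonempty i))]
    exact hx i (List.mem_finRange i)
  refine ⟨x, mem_diamondGrpSet_iff.2 fun i => mem_diamondsIn_iff_symmDiff.2 fun J => ?_⟩
  by_cases hJ : J = I
  · rw [hJ, hcorner]
  by_cases hJ' : J ∆ {i} = I
  · have hJI : J = I ∆ {i} := by rw [← hJ', symmDiff_symmDiff_cancel_right]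
    rw [hJ', hJI]
    exact (hcorner i).symm
  rw [Function.update_of_ne hJ, Function.update_of_ne hJ']
  exact hm₀ i J hJ hJ'

theorem puncture_surjective (I : Set (Fin n)) : Function.Surjective (puncture f I) := by
  classical
  intro d
  let m₀ : Set (Fin n) → X := fun J => if h : J = I then 1 else d.1 ⟨J, h⟩
  have hm₀ (i : Fin n) (J : Set (Fin n)) :
      J ≠ I → J ∆ {i} ≠ I → f i (m₀ J) = f i (m₀ (J ∆ {i})) :=
    forall_symmDiff_singleton (p := fun J K => J ≠ I → K ≠ I → f i (m₀ J) = f i (m₀ K))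
      (fun _ _ h hK hJ => (h hJ hK).symm)
      (fun J hi hJ hJ' => by simpa only [m₀, dif_neg hJ, dif_neg hJ'] using d.2 i J hi hJ hJ') J
  obtain ⟨x, hx⟩ := exists_update_mem_diamondGrpSet hm₀
  refine ⟨⟨_, hx⟩, Subtype.ext (funext fun J => ?_)⟩
  change Function.update m₀ I x J.1 = d.1 J
  rw [Function.update_of_ne J.2]
  exact dif_neg J.2

theorem exists_retraction (hCC : ∀ S : Set (Fin n), ⁅kerInter f S, kerInter f Sᶜ⁆ = ⊥)
    (I : Set (Fin n)) :
    ∃ ρ : diamondSubgroup f →* ↥(⨅ i, (f i).ker),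
      ρ.comp (singleDiamond f I) = MonoidHom.id _ := by
  classical
  have hcube (m : diamondSubgroup f) :
      m.1 ∘ (I ∆ ·) ∈ cubeSubgroup f (List.finRange n) {i | i ∉ List.finRange n} :=
    mem_cubeSubgroup.2
      ⟨fun i _ => comp_symmDiff_mem_diamondsIn I (mem_diamondGrpSet_iff.1 m.2 i),
        fun _ => mem_kerInter.2 fun i hi => absurd (List.mem_finRange i) hi⟩
  refine ⟨MonoidHom.mk' (fun m => ⟨iteratedDiff (List.finRange n) (m.1 ∘ (I ∆ ·)),
    Subgroup.mem_iInf.2 fun i => map_iteratedDiff (hcube m) i⟩)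
    fun m m' => Subtype.ext (iteratedDiff_mul hCC (hcube m) (hcube m')), ?_⟩
  refine MonoidHom.ext fun c => Subtype.ext ?_
  have hface :
      Pi.mulSingle I c.1 ∘ (I ∆ ·) = faceIndicator {i | i ∈ List.finRange n} c.1 := by
    funext J
    by_cases h : J = ∅ <;> simp [faceIndicator, Pi.mulSingle_apply, symmDiff_eq_left, h]
  change iteratedDiff (List.finRange n) (Pi.mulSingle I c.1 ∘ (I ∆ ·)) = c.1
  rw [hface, iteratedDiff_faceIndicator (List.nodup_finRange n)]

theorem exists_mulEquiv_prod (hCC : ∀ S : Set (Fin n), ⁅kerInter f S, kerInter f Sᶜ⁆ = ⊥)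
    (I : Set (Fin n)) :
    ∃ θ : diamondSubgroup f ≃* ↥(⨅ i, (f i).ker) × puncturedSubgroup f I,
      ∀ m, ((θ m).2).val = fun J : {J : Set (Fin n) // J ≠ I} => m.val J.1 := by
  obtain ⟨ρ, hρ⟩ := exists_retraction hCC I
  exact ⟨MulEquiv.ofBijective _
    (bijective_prod_of_splitting hρ (ker_puncture I) (puncture_surjective I)), fun _ => rfl⟩

theorem commutator_kerInter_eq_bot
    (hA : ∀ a ∈ ⨅ i, (f i).ker, ∀ b ∈ ⨅ i, (f i).ker, a * b = b * a) {I : Set (Fin n)}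
    (θ : diamondSubgroup f ≃* ↥(⨅ i, (f i).ker) × puncturedSubgroup f I)
    (hθ : ∀ m, ((θ m).2).val = fun J : {J : Set (Fin n) // J ≠ I} => m.val J.1)
    (S : Set (Fin n)) : ⁅kerInter f S, kerInter f Sᶜ⁆ = ⊥ := by
  rw [eq_bot_iff, Subgroup.commutator_le]
  intro a ha b hb
  have hface {T : Set (Fin n)} {c : X} (hc : c ∈ kerInter f T) :
      faceIndicator T c ∘ (I ∆ ·) ∈ diamondSubgroup f :=
    mem_diamondGrpSet_iff.2 fun i =>
      comp_symmDiff_mem_diamondsIn I (faceIndicator_mem_diamondsIn hc i)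
  set u : diamondSubgroup f := ⟨_, hface ha⟩
  set v : diamondSubgroup f := ⟨_, hface hb⟩
  have hoff (J : Set (Fin n)) (hJ : J ≠ I) : ⁅u, v⁆.1 J = 1 := by
    have hT : I ∆ J ≠ ∅ := fun h => hJ (symmDiff_eq_bot.1 h).symm
    by_cases h : Disjoint (I ∆ J) S
    · have h' : ¬ Disjoint (I ∆ J) Sᶜ := fun h' =>
        hT (Set.disjoint_univ.1 (by simpa using h.sup_right h'))
      simp [u, v, faceIndicator, h', commutatorElement_def]
    · simp [u, v, faceIndicator, h, commutatorElement_def]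
  have huv : ⁅u, v⁆ = 1 := θ.injective <| by
    rw [map_one]
    refine Prod.ext ?_ (Subtype.ext ?_)
    · rw [map_commutatorElement]
      change ⁅(θ u).1, (θ v).1⁆ = 1
      exact commutatorElement_eq_one_iff_mul_comm.2 (Subtype.ext (hA _ (θ u).1.2 _ (θ v).1.2))
    · rw [hθ]
      funext J
      exact hoff J.1 J.2
  have hI := congrArg (fun w : diamondSubgroup f => w.1 I) huv
  change ⁅faceIndicator S a (I ∆ I), faceIndicator Sᶜ b (I ∆ I)⁆ = 1 at hI
  simpa [faceIndicator] using hI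

end DiamondGroups

end Diamond

theorem higher_centrality_characterisation_general {n : ℕ}
    (F : Set (Fin n) → Type*) [∀ I, Group (F I)]
    (φ : ∀ I J : Set (Fin n), J ⊆ I → (F I →* F J)) :
    ((∀ I : Set (Fin n),
        ⁅⨅ i ∈ I, (initialMaps F φ i).ker, ⨅ i ∈ Iᶜ, (initialMaps F φ i).ker⁆ =
          (⊥ : Subgroup (F Set.univ))) ↔
      ((∀ a ∈ ⨅ i, (initialMaps F φ i).ker, ∀ b ∈ ⨅ i, (initialMaps F φ i).ker,
          a * b = b * a) ∧
        ∀ I : Set (Fin n),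
          ∃ θ : ↥(diamondSubgroup (initialMaps F φ)) ≃*
              ↥(⨅ i, (initialMaps F φ i).ker) ×
                ↥(puncturedSubgroup (initialMaps F φ) I),
            ∀ m : ↥(diamondSubgroup (initialMaps F φ)),
              ((θ m).2).val = fun J : {J : Set (Fin n) // J ≠ I} => m.val J.1)) ∧
    ((∀ I : Set (Fin n),
        ⁅⨅ i ∈ I, (initialMaps F φ i).ker, ⨅ i ∈ Iᶜ, (initialMaps F φ i).ker⁆ =
          (⊥ : Subgroup (F Set.univ))) ↔
      ((∀ a ∈ ⨅ i, (initialMaps F φ i).ker, ∀ b ∈ ⨅ i, (initialMaps F φ i).ker,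
          a * b = b * a) ∧
        ∃ I : Set (Fin n),
          ∃ θ : ↥(diamondSubgroup (initialMaps F φ)) ≃*
              ↥(⨅ i, (initialMaps F φ i).ker) ×
                ↥(puncturedSubgroup (initialMaps F φ) I),
            ∀ m : ↥(diamondSubgroup (initialMaps F φ)),
              ((θ m).2).val = fun J : {J : Set (Fin n) // J ≠ I} => m.val J.1)) := by
  constructor
  · refine ⟨fun hCC => ⟨fun _ ha b _ => Diamond.mul_comm_of_mem_iInf_ker hCC ha b,
      Diamond.exists_mulEquiv_prod hCC⟩, ?_⟩
    rintro ⟨hA, hθ⟩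
    obtain ⟨θ, hθ⟩ := hθ ∅
    exact Diamond.commutator_kerInter_eq_bot hA θ hθ
  · refine ⟨fun hCC => ⟨fun _ ha b _ => Diamond.mul_comm_of_mem_iInf_ker hCC ha b, ∅,
      Diamond.exists_mulEquiv_prod hCC ∅⟩, ?_⟩
    rintro ⟨hA, I, θ, hθ⟩
    exact Diamond.commutator_kerInter_eq_bot hA θ hθ

/-- For an `n`-cubic extension of groups `F`, the commutator condition
`⁅⋂_{i ∈ I} K i, ⋂_{i ∉ I} K i⁆ = 1` for all `I` is equivalent to `A` being
abelian together with a group isomorphism `⬜ ≅ A × ◇^I` over `π^I`, for all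
(equivalently, for some) `I ⊆ Fin n`. -/
theorem higher_centrality_characterisation {n : ℕ} (hn : 1 ≤ n)
    (F : Set (Fin n) → Type*) [∀ I, Group (F I)]
    (φ : ∀ I J : Set (Fin n), J ⊆ I → (F I →* F J))
    (φ_id : ∀ (I : Set (Fin n)) (h : I ⊆ I), φ I I h = MonoidHom.id (F I))
    (φ_comp : ∀ (I J K : Set (Fin n)) (hJI : J ⊆ I) (hKJ : K ⊆ J) (x : F I),
      φ J K hKJ (φ I J hJI x) = φ I K (hKJ.trans hJI) x)
    (hext : ∀ I : Set (Fin n), I ≠ ∅ →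
      ∀ y : (J : Set (Fin n)) → J ⊂ I → F J,
        (∀ (J K : Set (Fin n)) (hJ : J ⊂ I) (hK : K ⊂ I) (hKJ : K ⊆ J),
          φ J K hKJ (y J hJ) = y K hK) →
        ∃ x : F I, ∀ (J : Set (Fin n)) (hJ : J ⊂ I),
          φ I J hJ.subset x = y J hJ) :
    ((∀ I : Set (Fin n),
        ⁅⨅ i ∈ I, (initialMaps F φ i).ker, ⨅ i ∈ Iᶜ, (initialMaps F φ i).ker⁆ =
          (⊥ : Subgroup (F Set.univ))) ↔
      ((∀ a ∈ ⨅ i, (initialMaps F φ i).ker, ∀ b ∈ ⨅ i, (initialMaps F φ i).ker,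
          a * b = b * a) ∧
        ∀ I : Set (Fin n),
          ∃ θ : ↥(diamondSubgroup (initialMaps F φ)) ≃*
              ↥(⨅ i, (initialMaps F φ i).ker) ×
                ↥(puncturedSubgroup (initialMaps F φ) I),
            ∀ m : ↥(diamondSubgroup (initialMaps F φ)),
              ((θ m).2).val = fun J : {J : Set (Fin n) // J ≠ I} => m.val J.1)) ∧
    ((∀ I : Set (Fin n),
        ⁅⨅ i ∈ I, (initialMaps F φ i).ker, ⨅ i ∈ Iᶜ, (initialMaps F φ i).ker⁆ =
          (⊥ : Subgroup (F Set.univ))) ↔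
      ((∀ a ∈ ⨅ i, (initialMaps F φ i).ker, ∀ b ∈ ⨅ i, (initialMaps F φ i).ker,
          a * b = b * a) ∧
        ∃ I : Set (Fin n),
          ∃ θ : ↥(diamondSubgroup (initialMaps F φ)) ≃*
              ↥(⨅ i, (initialMaps F φ i).ker) ×
                ↥(puncturedSubgroup (initialMaps F φ) I),
            ∀ m : ↥(diamondSubgroup (initialMaps F φ)),
              ((θ m).2).val = fun J : {J : Set (Fin n) // J ≠ I} => m.val J.1)) :=
  higher_centrality_characterisation_general F φ
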